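/- If Γ is connected and there exists an edge e ∈ E such that there is exactly one v ∈ V with γ e v ≠ 0 (a connected leaf), then ker(γ) = {0}. -/
import Mathlib


/-- The defining property of the incidence matrix of a multiquiver: every row has
at most one positive and at most one negative entry. -/
def CondM {V E : Type*} (γ : E → V → ℤ) : Prop :=
  ∀ e : E, (∀ v w : V, 0 < γ e v → 0 < γ e w → v = w) ∧
    (∀ v w : V, γ e v < 0 → γ e w < 0 → v = w)

/-- Two vertices are adjacent if they are distinct and some edge is incident to
both of them. -/
def MQAdj {V E : Type*} (γ : E → V → ℤ) (v w : V) : Prop :=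
  v ≠ w ∧ ∃ e : E, γ e v ≠ 0 ∧ γ e w ≠ 0

/-- The multiquiver is connected if any two vertices are related by the
reflexive–transitive closure of adjacency. -/
def MQConnected {V E : Type*} (γ : E → V → ℤ) : Prop :=
  ∀ v w : V, Relation.ReflTransGen (MQAdj γ) v w

/-- The kernel of the incidence matrix `γ`, as a `ℚ`-subspace of `V → ℚ`:
`{d | ∀ e, Σ_v γ e v · d v = 0}`. -/
def kerGamma {V E : Type*} [Fintype V] (γ : E → V → ℤ) : Submodule ℚ (V → ℚ) where
  carrier := {d | ∀ e : E, ∑ v : V, (γ e v : ℚ) * d v = 0}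
  add_mem' := by
    intro a b ha hb e
    have : ∑ v : V, (γ e v : ℚ) * (a v + b v)
        = (∑ v : V, (γ e v : ℚ) * a v) + ∑ v : V, (γ e v : ℚ) * b v := by
      rw [← Finset.sum_add_distrib]
      exact Finset.sum_congr rfl fun v _ => by ring
    simpa [this] using by rw [ha e, hb e, add_zero]
  zero_mem' := by intro e; simp
  smul_mem' := by
    intro c a ha e
    have : ∑ v : V, (γ e v : ℚ) * (c * a v) = c * ∑ v : V, (γ e v : ℚ) * a v := by
      rw [Finset.mul_sum]
      exact Finset.sum_congr rfl fun v _ => by ring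
    simp only [Pi.smul_apply, smul_eq_mul]
    rw [this, ha e, mul_zero]

/-- A (not necessarily directed) cycle in the multiquiver with incidence matrix
`γ`: `n ≥ 2` distinct vertices `v i` and distinct edges `e i`, with `e i`
incident to `v i` and `v (i+1)` (indices mod `n`). -/
structure MQCycle {V E : Type*} (γ : E → V → ℤ) where
  n : ℕ
  hn : 2 ≤ n
  v : ZMod n → V
  e : ZMod n → E
  hv : Function.Injective v
  he : Function.Injective e
  h1 : ∀ i, γ (e i) (v i) ≠ 0
  h2 : ∀ i, γ (e i) (v (i + 1)) ≠ 0

/-- A cycle is balanced if the product of the multiplicities at its sources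
equals the product of the multiplicities at its targets. -/
def MQCycle.Balanced {V E : Type*} {γ : E → V → ℤ} (c : MQCycle γ) : Prop :=
  haveI : NeZero c.n := ⟨by have := c.hn; omega⟩
  ∏ i : ZMod c.n, (γ (c.e i) (c.v i)).natAbs = ∏ i : ZMod c.n, (γ (c.e i) (c.v (i + 1))).natAbs

/-- The setoid on vertices whose classes are the connected components. -/
def mqSetoid {V E : Type*} (γ : E → V → ℤ) : Setoid V :=
  ⟨Relation.EqvGen (MQAdj γ), Relation.EqvGen.is_equivalence _⟩

/-- The edge `e` is a leaf at the component `C`: exactly one vertex is incident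
to `e`, and that vertex lies in `C`. -/
def LeafAt {V E : Type*} (γ : E → V → ℤ) (C : Quotient (mqSetoid γ)) (e : E) : Prop :=
  (∃! v : V, γ e v ≠ 0) ∧ ∀ v : V, γ e v ≠ 0 → Quotient.mk (mqSetoid γ) v = C

/-- A connected component is in equilibrium if no edge is a leaf at it and every
cycle all of whose vertices lie in it is balanced. -/
def InEquilibrium {V E : Type*} (γ : E → V → ℤ) (C : Quotient (mqSetoid γ)) : Prop :=
  (∀ e : E, ¬ LeafAt γ C e) ∧
    ∀ c : MQCycle γ, (∀ i, Quotient.mk (mqSetoid γ) (c.v i) = C) → c.Balanced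

/-- If `Γ` is connected and has a connected leaf (an edge incident to exactly
one vertex), then `ker γ = {0}`. -/
theorem kerGamma_eq_bot_of_leaf {V E : Type*} [Fintype V] [Fintype E]
    (γ : E → V → ℤ) (hM : CondM γ) (hconn : MQConnected γ)
    (hleaf : ∃ e : E, ∃! v : V, γ e v ≠ 0) :
    kerGamma γ = ⊥ := by
  classical
  rw [eq_bot_iff]
  intro d hd
  have hd' : ∀ e : E, ∑ v : V, (γ e v : ℚ) * d v = 0 := hd
  simp only [Submodule.mem_bot]
  obtain ⟨e₀, v₀, hv₀, huniq⟩ := hleaf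
  have h0 : d v₀ = 0 := by
    have heq := hd' e₀
    have hsum : ∑ v : V, (γ e₀ v : ℚ) * d v = (γ e₀ v₀ : ℚ) * d v₀ := by
      apply Finset.sum_eq_single
      · intro u _ hu
        by_cases h : γ e₀ u = 0
        · simp [h]
        · exact absurd (huniq u h) hu
      · intro h; exact absurd (Finset.mem_univ v₀) h
    rw [hsum] at heq
    rcases mul_eq_zero.mp heq with h | h
    · exact absurd h (Int.cast_ne_zero.mpr hv₀)
    · exact h
  have step : ∀ v w : V, MQAdj γ v w → d v = 0 → d w = 0 := by
    rintro v w ⟨hvw, e, hv, hw⟩ hdv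
    obtain ⟨hP, hN⟩ := hM e
    have heq := hd' e
    have hsum : ∑ u : V, (γ e u : ℚ) * d u
        = (γ e v : ℚ) * d v + (γ e w : ℚ) * d w := by
      rw [← Finset.sum_pair (f := fun u => (γ e u : ℚ) * d u) hvw]
      symm
      apply Finset.sum_subset (Finset.subset_univ _)
      intro u _ hu
      simp only [Finset.mem_insert, Finset.mem_singleton, not_or] at hu
      by_cases h : γ e u = 0
      · simp [h]
      exfalso
      rcases lt_or_gt_of_ne h with hu' | hu'
      · rcases lt_or_gt_of_ne hv with h1 | h1
        · exact hu.1 (hN u v hu' h1)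
        · rcases lt_or_gt_of_ne hw with h2 | h2
          · exact hu.2 (hN u w hu' h2)
          · exact hvw (hP v w h1 h2)
      · rcases lt_or_gt_of_ne hv with h1 | h1
        · rcases lt_or_gt_of_ne hw with h2 | h2
          · exact hvw (hN v w h1 h2)
          · exact hu.2 (hP u w hu' h2)
        · exact hu.1 (hP u v hu' h1)
    rw [hsum, hdv, mul_zero, zero_add] at heq
    rcases mul_eq_zero.mp heq with h | h
    · exact absurd h (Int.cast_ne_zero.mpr hw)
    · exact h
  funext w
  have h := hconn v₀ w
  induction h with
  | refl => exact h0
  | tail _ hadj ih => exact step _ _ hadj ih
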